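/- arXiv:2010.07242 — 8 statements merged into one kernel-verified Lean document; each statement's English description precedes it below -/
import Mathlib

section
/- Let S be a nonempty compact subset of ℝ^D, P a Borel probability measure on S, and ε > 0. Then the operator T_ε, defined by T_ε f(x) = (∫_S Q_ε(x,x') f(x') dP(x')) / m_ε(x), is a well-defined bounded linear operator from L²(S,P) to L²(S,P) which is a compact operator; moreover it is symmetric with respect to the weighted pairing induced by m_ε, i.e. for all f, g ∈ L²(S,P), ∫_S (T_ε f)(x) g(x) m_ε(x) dP(x) = ∫_S f(x) (T_ε g)(x) m_ε(x) dP(x). -/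
open MeasureTheory

noncomputable section

/-- The Gaussian-like kernel `k_ε(x,y) = exp(-‖x-y‖²/(4ε²))`. -/
def gaussKer {D : ℕ} (ε : ℝ) (x y : EuclideanSpace ℝ (Fin D)) : ℝ :=
  Real.exp (-‖x - y‖ ^ 2 / (4 * ε ^ 2))

/-- The degree function `d_ε(x) = ∫ k_ε(x,x') dP(x')`. -/
def degFun {D : ℕ} (ε : ℝ) (μ : Measure (EuclideanSpace ℝ (Fin D)))
    (x : EuclideanSpace ℝ (Fin D)) : ℝ :=
  ∫ y, gaussKer ε x y ∂μ

/-- The normalized kernel `Q_ε(x,x') = k_ε(x,x')/(d_ε(x) d_ε(x'))`. -/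
def Qker {D : ℕ} (ε : ℝ) (μ : Measure (EuclideanSpace ℝ (Fin D)))
    (x y : EuclideanSpace ℝ (Fin D)) : ℝ :=
  gaussKer ε x y / (degFun ε μ x * degFun ε μ y)

/-- The normalization `m_ε(x) = ∫ Q_ε(x,x') dP(x')`. -/
def mFun {D : ℕ} (ε : ℝ) (μ : Measure (EuclideanSpace ℝ (Fin D)))
    (x : EuclideanSpace ℝ (Fin D)) : ℝ :=
  ∫ y, Qker ε μ x y ∂μ

/-- The operator `T_ε f(x) = (∫ Q_ε(x,x') f(x') dP(x')) / m_ε(x)`. -/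
def Tfun {D : ℕ} (ε : ℝ) (μ : Measure (EuclideanSpace ℝ (Fin D)))
    (f : EuclideanSpace ℝ (Fin D) → ℝ) (x : EuclideanSpace ℝ (Fin D)) : ℝ :=
  (∫ y, Qker ε μ x y * f y ∂μ) / mFun ε μ x

/-!
`T_ε` is the integral operator with kernel `p(x, y) = Q_ε(x, y) / m_ε(x)`, which is continuous on
`ℝ^D × ℝ^D` because `d_ε` and `m_ε` are continuous and strictly positive. As `P` lives on the
compact set `S`, `p` is bounded where it matters, so `T_ε` maps `L² ⊆ L¹` boundedly into bounded
functions. For compactness, take a simple function `π` with `dist (π x) x < η` on `S`: the operator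
`f ↦ (T_ε f) ∘ π` factors through the finite-dimensional space of functions on the range of `π`,
and by uniform continuity of `p` on `S × S` it is `δ`-close to `T_ε` in operator norm; compact
operators form a closed set. Symmetry holds because `m_ε(x) p(x, y) = Q_ε(x, y)` is symmetric,
so Fubini exchanges the two sides.
-/

open Filter Function

lemma isCompactOperator_of_forall_exists_norm_sub_le {𝕜 E F : Type*} [NontriviallyNormedField 𝕜]
    [NormedAddCommGroup E] [NormedSpace 𝕜 E] [NormedAddCommGroup F] [NormedSpace 𝕜 F]
    [CompleteSpace F] {T : E →L[𝕜] F}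
    (h : ∀ δ > 0, ∃ T' : E →L[𝕜] F, IsCompactOperator T' ∧ ‖T - T'‖ ≤ δ) :
    IsCompactOperator T :=
  isClosed_setOfPred_isCompactOperator.closure_subset <| Metric.mem_closure_iff.mpr fun δ hδ ↦
    let ⟨T', hT', hle⟩ := h (δ / 2) (half_pos hδ)
    ⟨T', hT', by rw [dist_eq_norm]; linarith⟩

lemma Continuous.exists_pos_dist_lt_of_isCompact {X Y Z : Type*} [PseudoMetricSpace X]
    [PseudoMetricSpace Y] [PseudoMetricSpace Z] {K : X → Y → Z} (hK : Continuous (uncurry K))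
    {S : Set X} {S' : Set Y} (hS : IsCompact S) (hS' : IsCompact S') {δ : ℝ} (hδ : 0 < δ) :
    ∃ η > 0, ∀ x ∈ S, ∀ x', dist x x' < η → ∀ y ∈ S', dist (K x y) (K x' y) < δ := by
  obtain ⟨η, hη, hV⟩ := Metric.mem_uniformity_dist.mp <|
    (hS.prod hS').uniformContinuousAt_of_continuousAt (uncurry K)
      (fun z _ ↦ hK.continuousAt) (Metric.dist_mem_uniformity hδ)
  refine ⟨η, hη, fun x hx x' hxx' y hy ↦ hV (a := (x, y)) (b := (x', y)) ?_ ⟨hx, hy⟩⟩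
  simpa [Prod.dist_eq] using hxx'

lemma IsCompact.exists_simpleFunc_dist_lt {X : Type*} [MetricSpace X] [MeasurableSpace X]
    [OpensMeasurableSpace X] [TopologicalSpace.SeparableSpace X] [Nonempty X] {S : Set X}
    (hS : IsCompact S) {η : ℝ} (hη : 0 < η) : ∃ p : SimpleFunc X X, ∀ x ∈ S, dist (p x) x < η := by
  set e := TopologicalSpace.denseSeq X
  obtain ⟨t, ht⟩ := hS.elim_finite_subcover (fun k ↦ Metric.ball (e k) η)
    (fun _ ↦ Metric.isOpen_ball) fun x _ ↦ Set.mem_iUnion.mpr <| by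
      simpa [dist_comm] using (TopologicalSpace.denseRange_denseSeq X).exists_dist_lt x hη
  refine ⟨SimpleFunc.nearestPt e (t.sup id), fun x hx ↦ ?_⟩
  obtain ⟨k, hk, hxk⟩ := Set.mem_iUnion₂.mp (ht hx)
  have hle := SimpleFunc.edist_nearestPt_le e x (Finset.le_sup (f := id) hk)
  rw [edist_dist, edist_dist, ENNReal.ofReal_le_ofReal_iff dist_nonneg] at hle
  exact hle.trans_lt (by rwa [dist_comm, ← Metric.mem_ball])

lemma integral_norm_le_norm_L2 {X : Type*} [MeasurableSpace X] {μ : Measure X}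
    [IsProbabilityMeasure μ] (f : Lp ℝ 2 μ) : ∫ y, ‖f y‖ ∂μ ≤ ‖f‖ := by
  rw [integral_norm_eq_lintegral_enorm (Lp.aestronglyMeasurable f),
    ← eLpNorm_one_eq_lintegral_enorm, Lp.norm_def]
  exact ENNReal.toReal_mono (Lp.eLpNorm_ne_top f)
    (eLpNorm_le_eLpNorm_of_exponent_le one_le_two (Lp.aestronglyMeasurable f))

section KernelOperator

variable {X : Type*} [MeasurableSpace X] {μ : Measure X} {S : Set X} {K : X → X → ℝ}
  {φ f g : X → ℝ}

def kernelOp (μ : Measure X) (K : X → X → ℝ) (f : X → ℝ) (x : X) : ℝ :=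
  ∫ y, K x y * f y ∂μ

lemma norm_integral_mul_le (hμS : ∀ᵐ y ∂μ, y ∈ S) {C : ℝ} (hφ : ∀ y ∈ S, ‖φ y‖ ≤ C)
    (hf : Integrable f μ) : ‖∫ y, φ y * f y ∂μ‖ ≤ C * ∫ y, ‖f y‖ ∂μ := by
  rw [← integral_const_mul]
  refine norm_integral_le_of_norm_le (hf.norm.const_mul C) ?_
  filter_upwards [hμS] with y hy
  rw [norm_mul]
  exact mul_le_mul_of_nonneg_right (hφ y hy) (norm_nonneg _)

lemma kernelOp_congr (h : f =ᵐ[μ] g) : kernelOp μ K f = kernelOp μ K g :=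
  funext fun x ↦ integral_congr_ae (h.mono fun y hy ↦ by simp only [hy])

lemma kernelOp_smul (c : ℝ) : kernelOp μ K (c • f) = c • kernelOp μ K f := by
  funext x
  simp only [kernelOp, Pi.smul_apply, smul_eq_mul, ← integral_const_mul, mul_left_comm c]

variable [MetricSpace X]

lemma Continuous.exists_ae_bound_of_isCompact (hφ : Continuous φ) (hS : IsCompact S)
    (hμS : ∀ᵐ y ∂μ, y ∈ S) : ∃ C, ∀ᵐ y ∂μ, ‖φ y‖ ≤ C := by
  obtain ⟨C, hC⟩ := hS.exists_bound_of_continuousOn hφ.continuousOn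
  exact ⟨C, hμS.mono hC⟩

variable [OpensMeasurableSpace X]

lemma Continuous.memLp_of_isCompact [IsFiniteMeasure μ] (hφ : Continuous φ) (hS : IsCompact S)
    (hμS : ∀ᵐ y ∂μ, y ∈ S) (p : ENNReal) : MemLp φ p μ :=
  let ⟨C, hC⟩ := hφ.exists_ae_bound_of_isCompact hS hμS
  .of_bound hφ.aestronglyMeasurable C hC

lemma Continuous.integrable_mul_of_isCompact (hφ : Continuous φ) (hS : IsCompact S)
    (hμS : ∀ᵐ y ∂μ, y ∈ S) (hf : Integrable f μ) : Integrable (fun y ↦ φ y * f y) μ :=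
  let ⟨_, hC⟩ := hφ.exists_ae_bound_of_isCompact hS hμS
  hf.bdd_mul hφ.aestronglyMeasurable hC

lemma Continuous.integral_pos_of_isCompact [IsProbabilityMeasure μ] (hφ : Continuous φ)
    (hS : IsCompact S) (hμS : ∀ᵐ y ∂μ, y ∈ S) (hpos : ∀ y, 0 < φ y) : 0 < ∫ y, φ y ∂μ := by
  rw [integral_pos_iff_support_of_nonneg (fun y ↦ (hpos y).le)
    ((hφ.memLp_of_isCompact hS hμS 1).integrable le_rfl),
    support_eq_univ fun y ↦ (hpos y).ne']
  simp

lemma continuous_integral_of_isCompact [ProperSpace X] [IsFiniteMeasure μ] (hS : IsCompact S)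
    (hμS : ∀ᵐ y ∂μ, y ∈ S) (hK : Continuous (uncurry K)) :
    Continuous fun x ↦ ∫ y, K x y ∂μ := by
  simpa only [Measure.restrict_eq_self_of_ae_mem hμS] using
    continuous_parametric_integral_of_continuous (μ := μ) hK hS

lemma kernelOp_add (hS : IsCompact S) (hμS : ∀ᵐ y ∂μ, y ∈ S) (hK : Continuous (uncurry K))
    (hf : Integrable f μ) (hg : Integrable g μ) :
    kernelOp μ K (f + g) = kernelOp μ K f + kernelOp μ K g := by
  funext x
  simp only [kernelOp, Pi.add_apply, mul_add]
  exact integral_add ((hK.uncurry_left x).integrable_mul_of_isCompact hS hμS hf)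
    ((hK.uncurry_left x).integrable_mul_of_isCompact hS hμS hg)

lemma norm_kernelOp_sub_le (hS : IsCompact S) (hμS : ∀ᵐ y ∂μ, y ∈ S)
    (hK : Continuous (uncurry K)) (hf : Integrable f μ) {x x' : X} {δ : ℝ}
    (hδ : ∀ y ∈ S, ‖K x y - K x' y‖ ≤ δ) :
    ‖kernelOp μ K f x - kernelOp μ K f x'‖ ≤ δ * ∫ y, ‖f y‖ ∂μ := by
  rw [kernelOp, kernelOp, ← integral_sub
    ((hK.uncurry_left x).integrable_mul_of_isCompact hS hμS hf)
    ((hK.uncurry_left x').integrable_mul_of_isCompact hS hμS hf)]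
  simpa only [sub_mul] using norm_integral_mul_le hμS hδ hf

lemma exists_isCompactOperator_ae_eq_kernelOp_comp [IsFiniteMeasure μ] (hS : IsCompact S)
    (hμS : ∀ᵐ y ∂μ, y ∈ S) (hK : Continuous (uncurry K)) (p : SimpleFunc X X) :
    ∃ F : Lp ℝ 2 μ →L[ℝ] Lp ℝ 2 μ, IsCompactOperator F ∧
      ∀ f : Lp ℝ 2 μ, F f =ᵐ[μ] fun x ↦ kernelOp μ K f (p x) := by
  let g (z : X) : Lp ℝ 2 μ := ((hK.uncurry_left z).memLp_of_isCompact hS hμS 2).toLp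
  have hg (z : X) (f : Lp ℝ 2 μ) : inner ℝ (g z) f = kernelOp μ K f z := by
    rw [L2.inner_def]
    refine integral_congr_ae ?_
    filter_upwards [((hK.uncurry_left z).memLp_of_isCompact hS hμS 2).coeFn_toLp] with y hy
    simp [g, hy, mul_comm]
  -- `F = J ∘ E` factors through the finite-dimensional space of functions on the range of `p`.
  let E : Lp ℝ 2 μ →L[ℝ] (p.range → ℝ) := ContinuousLinearMap.pi fun z ↦ innerSL ℝ (g z)
  have hJ (c : p.range → ℝ) : MemLp (fun x ↦ c ⟨p x, p.mem_range_self x⟩) 2 μ :=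
    .of_bound ((measurable_of_countable c).comp p.measurable.subtype_mk).aestronglyMeasurable
      ‖c‖ (ae_of_all _ fun x ↦ norm_le_pi_norm c _)
  let J : (p.range → ℝ) →ₗ[ℝ] Lp ℝ 2 μ :=
    { toFun c := (hJ c).toLp
      map_add' c c' := MemLp.toLp_add (hJ c) (hJ c')
      map_smul' a c := MemLp.toLp_const_smul a (hJ c) }
  refine ⟨LinearMap.toContinuousLinearMap J ∘L E,
    (isCompactOperator_of_locallyCompactSpace_dom E).clm_comp (LinearMap.toContinuousLinearMap J),
    fun f ↦ ?_⟩
  filter_upwards [(hJ (E f)).coeFn_toLp] with x hx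
  simpa [J, E, hg] using hx

variable [SecondCountableTopology X]

lemma aestronglyMeasurable_kernelOp [SFinite μ] (hK : Continuous (uncurry K))
    (hf : AEStronglyMeasurable f μ) : AEStronglyMeasurable (kernelOp μ K f) μ :=
  AEStronglyMeasurable.integral_prod_right' (f := fun z : X × X ↦ K z.1 z.2 * f z.2)
    (hK.aestronglyMeasurable.mul hf.comp_snd)

lemma exists_clm_ae_eq_kernelOp [IsProbabilityMeasure μ] (hS : IsCompact S)
    (hμS : ∀ᵐ y ∂μ, y ∈ S) (hK : Continuous (uncurry K)) :
    ∃ T : Lp ℝ 2 μ →L[ℝ] Lp ℝ 2 μ, ∀ f : Lp ℝ 2 μ, T f =ᵐ[μ] kernelOp μ K f := by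
  obtain ⟨C, hC⟩ := (hS.prod hS).exists_bound_of_continuousOn hK.continuousOn
  obtain ⟨x₀, hx₀⟩ := hμS.exists
  have hC₀ : 0 ≤ C := (norm_nonneg _).trans (hC (x₀, x₀) ⟨hx₀, hx₀⟩)
  have hbound (f : Lp ℝ 2 μ) : ∀ᵐ x ∂μ, ‖kernelOp μ K f x‖ ≤ C * ‖f‖ := by
    filter_upwards [hμS] with x hx
    refine (norm_integral_mul_le hμS (fun y hy ↦ hC (x, y) ⟨hx, hy⟩)
      ((Lp.memLp f).integrable one_le_two)).trans ?_
    gcongr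
    exact integral_norm_le_norm_L2 f
  have hmem (f : Lp ℝ 2 μ) : MemLp (kernelOp μ K f) 2 μ :=
    .of_bound (aestronglyMeasurable_kernelOp hK (Lp.aestronglyMeasurable f)) _ (hbound f)
  let L : Lp ℝ 2 μ →ₗ[ℝ] Lp ℝ 2 μ :=
    { toFun f := (hmem f).toLp
      map_add' f g := by
        rw [MemLp.toLp_congr _ ((hmem f).add (hmem g)) (.of_eq <| by
          rw [kernelOp_congr (Lp.coeFn_add f g), kernelOp_add hS hμS hK
            ((Lp.memLp f).integrable one_le_two) ((Lp.memLp g).integrable one_le_two)]),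
          MemLp.toLp_add]
      map_smul' c f := by
        rw [MemLp.toLp_congr _ ((hmem f).const_smul c) (.of_eq <| by
          rw [kernelOp_congr (Lp.coeFn_smul c f), kernelOp_smul]), MemLp.toLp_const_smul]
        rfl }
  refine ⟨L.mkContinuous C fun f ↦ ?_, fun f ↦ (hmem f).coeFn_toLp⟩
  refine (Lp.norm_le_of_ae_bound (C := C * ‖f‖) (by positivity) ?_).trans
    (by simp [measureUnivNNReal])
  filter_upwards [(hmem f).coeFn_toLp, hbound f] with x hx hxf
  simpa [L, hx] using hxf

lemma isCompactOperator_of_ae_eq_kernelOp [IsProbabilityMeasure μ] (hS : IsCompact S)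
    (hμS : ∀ᵐ y ∂μ, y ∈ S) (hK : Continuous (uncurry K)) {T : Lp ℝ 2 μ →L[ℝ] Lp ℝ 2 μ}
    (hT : ∀ f : Lp ℝ 2 μ, T f =ᵐ[μ] kernelOp μ K f) : IsCompactOperator T := by
  have := nonempty_of_isProbabilityMeasure μ
  refine isCompactOperator_of_forall_exists_norm_sub_le fun δ hδ ↦ ?_
  obtain ⟨η, hη, hKη⟩ := hK.exists_pos_dist_lt_of_isCompact hS hS hδ
  obtain ⟨p, hp⟩ := hS.exists_simpleFunc_dist_lt hη
  obtain ⟨F, hF, hFf⟩ := exists_isCompactOperator_ae_eq_kernelOp_comp hS hμS hK p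
  refine ⟨F, hF, ContinuousLinearMap.opNorm_le_bound _ hδ.le fun f ↦ ?_⟩
  have hf : Integrable f μ := (Lp.memLp f).integrable one_le_two
  calc ‖(T - F) f‖ ≤ δ * ∫ y, ‖f y‖ ∂μ := by
        refine (Lp.norm_le_of_ae_bound (C := δ * ∫ y, ‖f y‖ ∂μ) (by positivity) ?_).trans
          (by simp [measureUnivNNReal])
        filter_upwards [Lp.coeFn_sub (T f) (F f), hT f, hFf f, hμS] with x hsub hTx hFx hx
        rw [sub_apply, hsub, Pi.sub_apply, hTx, hFx]
        refine norm_kernelOp_sub_le hS hμS hK hf fun y hy ↦ ?_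
        rw [← dist_eq_norm]
        exact (hKη x hx (p x) (by rw [dist_comm]; exact hp x hx) y hy).le
    _ ≤ δ * ‖f‖ := by gcongr; exact integral_norm_le_norm_L2 f

lemma integral_kernelOp_mul_mul_eq [IsFiniteMeasure μ] (hS : IsCompact S)
    (hμS : ∀ᵐ y ∂μ, y ∈ S) (hK : Continuous (uncurry K)) {w : X → ℝ} (hw : Continuous w)
    (hrev : ∀ x y, w x * K x y = w y * K y x) (hf : Integrable f μ) (hg : Integrable g μ) :
    ∫ x, kernelOp μ K f x * g x * w x ∂μ = ∫ x, f x * kernelOp μ K g x * w x ∂μ := by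
  have hW : Continuous fun z : X × X ↦ w z.1 * K z.1 z.2 := (hw.comp continuous_fst).mul hK
  obtain ⟨C, hC⟩ := (hS.prod hS).exists_bound_of_continuousOn hW.continuousOn
  have hint : Integrable (uncurry fun x y ↦ w x * K x y * (g x * f y)) (μ.prod μ) :=
    (hg.mul_prod hf).bdd_mul hW.aestronglyMeasurable <| by
      filter_upwards [(Measure.quasiMeasurePreserving_fst.ae hμS).and
        (Measure.quasiMeasurePreserving_snd.ae hμS)] with z hz using hC z hz
  calc ∫ x, kernelOp μ K f x * g x * w x ∂μ = ∫ x, ∫ y, w x * K x y * (g x * f y) ∂μ ∂μ := by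
        congr 1; funext x
        simp only [kernelOp, ← integral_mul_const]
        congr 1; funext y; ring
    _ = ∫ y, ∫ x, w x * K x y * (g x * f y) ∂μ ∂μ := integral_integral_swap hint
    _ = ∫ y, f y * kernelOp μ K g y * w y ∂μ := by
        congr 1; funext y
        simp only [kernelOp, ← integral_const_mul, ← integral_mul_const]
        congr 1; funext x; linear_combination (g x * f y) * hrev x y

end KernelOperator

section DiffusionMaps

variable {D : ℕ} {ε : ℝ} {μ : Measure (EuclideanSpace ℝ (Fin D))}
  {S : Set (EuclideanSpace ℝ (Fin D))}

def transitionKer (ε : ℝ) (μ : Measure (EuclideanSpace ℝ (Fin D)))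
    (x y : EuclideanSpace ℝ (Fin D)) : ℝ :=
  Qker ε μ x y / mFun ε μ x

lemma Tfun_eq_kernelOp (f : EuclideanSpace ℝ (Fin D) → ℝ) :
    Tfun ε μ f = kernelOp μ (transitionKer ε μ) f := by
  funext x
  simp only [Tfun, kernelOp, transitionKer, ← integral_div, mul_div_right_comm]

lemma continuous_gaussKer : Continuous (uncurry (gaussKer (D := D) ε)) := by
  unfold gaussKer; fun_prop

lemma Qker_comm (x y : EuclideanSpace ℝ (Fin D)) : Qker ε μ x y = Qker ε μ y x := by
  simp only [Qker, gaussKer, norm_sub_rev x y, mul_comm (degFun ε μ x)]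

variable [IsProbabilityMeasure μ]

lemma degFun_pos (hS : IsCompact S) (hμS : ∀ᵐ y ∂μ, y ∈ S) (x : EuclideanSpace ℝ (Fin D)) :
    0 < degFun ε μ x :=
  (continuous_gaussKer.uncurry_left x).integral_pos_of_isCompact hS hμS fun _ ↦ Real.exp_pos _

lemma continuous_Qker (hS : IsCompact S) (hμS : ∀ᵐ y ∂μ, y ∈ S) :
    Continuous (uncurry (Qker ε μ)) := by
  have hd := continuous_integral_of_isCompact hS hμS (continuous_gaussKer (ε := ε))
  exact continuous_gaussKer.div ((hd.comp continuous_fst).mul (hd.comp continuous_snd))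
    fun z ↦ (mul_pos (degFun_pos hS hμS z.1) (degFun_pos hS hμS z.2)).ne'

lemma mFun_pos (hS : IsCompact S) (hμS : ∀ᵐ y ∂μ, y ∈ S) (x : EuclideanSpace ℝ (Fin D)) :
    0 < mFun ε μ x :=
  ((continuous_Qker hS hμS).uncurry_left x).integral_pos_of_isCompact hS hμS fun y ↦
    div_pos (Real.exp_pos _) (mul_pos (degFun_pos hS hμS x) (degFun_pos hS hμS y))

lemma continuous_mFun (hS : IsCompact S) (hμS : ∀ᵐ y ∂μ, y ∈ S) : Continuous (mFun ε μ) :=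
  continuous_integral_of_isCompact hS hμS (continuous_Qker hS hμS)

lemma continuous_transitionKer (hS : IsCompact S) (hμS : ∀ᵐ y ∂μ, y ∈ S) :
    Continuous (uncurry (transitionKer ε μ)) :=
  (continuous_Qker hS hμS).div ((continuous_mFun hS hμS).comp continuous_fst)
    fun z ↦ (mFun_pos hS hμS z.1).ne'

lemma mFun_mul_transitionKer_comm (hS : IsCompact S) (hμS : ∀ᵐ y ∂μ, y ∈ S)
    (x y : EuclideanSpace ℝ (Fin D)) :
    mFun ε μ x * transitionKer ε μ x y = mFun ε μ y * transitionKer ε μ y x := by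
  simp only [transitionKer, mul_div_cancel₀ _ (mFun_pos hS hμS _).ne', Qker_comm x y]

end DiffusionMaps

theorem stmt0_general {D : ℕ} (S : Set (EuclideanSpace ℝ (Fin D))) (hS : IsCompact S)
    (μ : Measure (EuclideanSpace ℝ (Fin D))) [IsProbabilityMeasure μ]
    (hμS : μ Sᶜ = 0) (ε : ℝ) :
    ∃ T : Lp ℝ 2 μ →L[ℝ] Lp ℝ 2 μ,
      (∀ f : Lp ℝ 2 μ, (T f : EuclideanSpace ℝ (Fin D) → ℝ) =ᵐ[μ] Tfun ε μ f) ∧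
      IsCompactOperator T ∧
      (∀ f g : Lp ℝ 2 μ,
        ∫ x, Tfun ε μ f x * g x * mFun ε μ x ∂μ
          = ∫ x, f x * Tfun ε μ g x * mFun ε μ x ∂μ) := by
  have hSμ : ∀ᵐ y ∂μ, y ∈ S := mem_ae_iff.mpr hμS
  have hK := continuous_transitionKer (ε := ε) hS hSμ
  obtain ⟨T, hT⟩ := exists_clm_ae_eq_kernelOp hS hSμ hK
  refine ⟨T, fun f ↦ Tfun_eq_kernelOp (μ := μ) (ε := ε) f ▸ hT f,
    isCompactOperator_of_ae_eq_kernelOp hS hSμ hK hT, fun f g ↦ ?_⟩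
  simp only [Tfun_eq_kernelOp]
  exact integral_kernelOp_mul_mul_eq hS hSμ hK (continuous_mFun hS hSμ)
    (mFun_mul_transitionKer_comm hS hSμ) ((Lp.memLp f).integrable one_le_two)
    ((Lp.memLp g).integrable one_le_two)

/-- `T_ε` is a well-defined bounded linear operator on `L²(S,P)` which is a
compact operator, and it is symmetric with respect to the `m_ε`-weighted pairing. -/
theorem stmt0 {D : ℕ} (S : Set (EuclideanSpace ℝ (Fin D))) (hS : IsCompact S)
    (hSne : S.Nonempty) (μ : Measure (EuclideanSpace ℝ (Fin D))) [IsProbabilityMeasure μ]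
    (hμS : μ Sᶜ = 0) (ε : ℝ) (hε : 0 < ε) :
    ∃ T : Lp ℝ 2 μ →L[ℝ] Lp ℝ 2 μ,
      (∀ f : Lp ℝ 2 μ, (T f : EuclideanSpace ℝ (Fin D) → ℝ) =ᵐ[μ] Tfun ε μ f) ∧
      IsCompactOperator T ∧
      (∀ f g : Lp ℝ 2 μ,
        ∫ x, Tfun ε μ f x * g x * mFun ε μ x ∂μ
          = ∫ x, f x * Tfun ε μ g x * mFun ε μ x ∂μ) :=
  stmt0_general S hS μ hμS ε
end
end

section
/- Let ε > 0, let x₁, …, x_{m+n} ∈ ℝ^D, and let x_{m+n+1}, …, x_{m+n+ℓ} ∈ ℝ^D be additional points. Define q_ε(x) = Σ_{i=1}^{m+n} k_ε(x, x_i), the matrix W ∈ ℝ^{(m+n)×(m+n)} by W_{ij} = k_ε(x_i,x_j)/(q_ε(x_i)q_ε(x_j)), D diagonal with D_{ii} = Σ_j W_{ij}, A = D⁻¹W, L = (A − I)/ε², and the extension matrix E ∈ ℝ^{(m+n+ℓ)×(m+n)} by E_{ij} = [k_ε(x_i,x_j)/(q_ε(x_i)q_ε(x_j))] / (Σ_{j'=1}^{m+n}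 k_ε(x_i,x_{j'})/(q_ε(x_i)q_ε(x_{j'}))) for 1 ≤ i ≤ m+n+ℓ and 1 ≤ j ≤ m+n. If ṽ ∈ ℝ^{m+n} satisfies −Lṽ = μṽ with ε²μ ≠ 1, then for every 1 ≤ j ≤ m+n, (1/(1−ε²μ)) (Eṽ)(j) = ṽ(j). -/
open MeasureTheory

noncomputable section

/-- The empirical degree `q_ε(x) = Σ_i k_ε(x, x_i)` of a point with respect to sample points. -/
def qDeg {D N : ℕ} (ε : ℝ) (x : Fin N → EuclideanSpace ℝ (Fin D))
    (p : EuclideanSpace ℝ (Fin D)) : ℝ :=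
  ∑ i, gaussKer ε p (x i)

/-- The kernel-normalized affinity matrix `W_{ij} = k_ε(x_i,x_j)/(q_ε(x_i) q_ε(x_j))`. -/
def Wmat {D N : ℕ} (ε : ℝ) (x : Fin N → EuclideanSpace ℝ (Fin D)) :
    Matrix (Fin N) (Fin N) ℝ :=
  Matrix.of fun i j => gaussKer ε (x i) (x j) / (qDeg ε x (x i) * qDeg ε x (x j))

/-- The row-stochastic matrix `A = D⁻¹ W` where `D_{ii} = Σ_j W_{ij}`. -/
def Amat {D N : ℕ} (ε : ℝ) (x : Fin N → EuclideanSpace ℝ (Fin D)) :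
    Matrix (Fin N) (Fin N) ℝ :=
  Matrix.of fun i j => Wmat ε x i j / ∑ l, Wmat ε x i l

/-- The kernel-normalized graph Laplacian `L = (A - I)/ε²`. -/
def Lmat {D N : ℕ} (ε : ℝ) (x : Fin N → EuclideanSpace ℝ (Fin D)) :
    Matrix (Fin N) (Fin N) ℝ :=
  (1 / ε ^ 2) • (Amat ε x - 1)

/-- The Nyström extension matrix `E ∈ ℝ^{(m+n+ℓ)×(m+n)}` built from the original `m+n` points
(the first `m+n` coordinates of `x`) and `ℓ` additional points. -/
def extMat {D m n ℓ : ℕ} (ε : ℝ) (x : Fin (m + n + ℓ) → EuclideanSpace ℝ (Fin D)) :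
    Matrix (Fin (m + n + ℓ)) (Fin (m + n)) ℝ :=
  Matrix.of fun i j =>
    (gaussKer ε (x i) (x (Fin.castAdd ℓ j)) /
      (qDeg ε (fun j' : Fin (m + n) => x (Fin.castAdd ℓ j')) (x i) *
        qDeg ε (fun j' : Fin (m + n) => x (Fin.castAdd ℓ j')) (x (Fin.castAdd ℓ j)))) /
    ∑ j' : Fin (m + n),
      gaussKer ε (x i) (x (Fin.castAdd ℓ j')) /
        (qDeg ε (fun j'' : Fin (m + n) => x (Fin.castAdd ℓ j'')) (x i) *
          qDeg ε (fun j'' : Fin (m + n) => x (Fin.castAdd ℓ j'')) (x (Fin.castAdd ℓ j')))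

theorem extMat_mulVec_castAdd {D m n ℓ : ℕ} (ε : ℝ)
    (x : Fin (m + n + ℓ) → EuclideanSpace ℝ (Fin D)) (v : Fin (m + n) → ℝ) (j : Fin (m + n)) :
    (extMat ε x).mulVec v (Fin.castAdd ℓ j) =
      (Amat ε (fun j : Fin (m + n) => x (Fin.castAdd ℓ j))).mulVec v j :=
  rfl

theorem Matrix.mulVec_eq_of_laplacian_eigen {ι K : Type*} [Fintype ι] [DecidableEq ι]
    [Field K] {A : Matrix ι ι K} {c μ : K} {v : ι → K} (hc : c ≠ 0)
    (hv : (-((1 / c ^ 2) • (A - 1))).mulVec v = μ • v) :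
    A.mulVec v = (1 - c ^ 2 * μ) • v := by
  have hsub : v - A.mulVec v = (c ^ 2 * μ) • v := by
    have := congrArg (c ^ 2 • ·) hv
    rwa [Matrix.neg_mulVec, Matrix.smul_mulVec, Matrix.sub_mulVec, Matrix.one_mulVec, smul_neg,
      smul_smul, mul_one_div_cancel (pow_ne_zero 2 hc), one_smul, neg_sub, smul_smul] at this
  rw [sub_smul, one_smul, ← hsub, sub_sub_cancel]

/-- If `ṽ` is an eigenvector of `-L` with eigenvalue `μ` and `ε²μ ≠ 1`, then
`(1/(1-ε²μ)) E ṽ` agrees with `ṽ` on the original points. -/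
theorem stmt8 {D m n ℓ : ℕ} (ε : ℝ) (hε : 0 < ε)
    (x : Fin (m + n + ℓ) → EuclideanSpace ℝ (Fin D))
    (μ : ℝ) (v : Fin (m + n) → ℝ)
    (hv : (-(Lmat ε (fun j : Fin (m + n) => x (Fin.castAdd ℓ j)))).mulVec v = μ • v)
    (hμ : ε ^ 2 * μ ≠ 1) :
    ∀ j : Fin (m + n),
      (1 / (1 - ε ^ 2 * μ)) * (extMat ε x).mulVec v (Fin.castAdd ℓ j) = v j := by
  intro j
  have hne : 1 - ε ^ 2 * μ ≠ 0 := sub_ne_zero.mpr hμ.symm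
  rw [extMat_mulVec_castAdd, Matrix.mulVec_eq_of_laplacian_eigen hε.ne' hv, Pi.smul_apply,
    smul_eq_mul, ← mul_assoc, one_div_mul_cancel hne, one_mul]
end
end

section
/- Let ε > 0 and t ∈ ℝ. Let x₁, …, x_{m+n} ∈ ℝ^D and additional points x_{m+n+1}, …, x_{m+n+ℓ} ∈ ℝ^D. With q_ε(x) = Σ_{i=1}^{m+n} k_ε(x,x_i), W_{ij} = k_ε(x_i,x_j)/(q_ε(x_i)q_ε(x_j)), D_{ii} = Σ_j W_{ij}, A = D⁻¹W, L = (A − I)/ε², and E ∈ ℝ^{(m+n+ℓ)×(m+n)} defined by E_{ij} = [k_ε(x_i,x_j)/(q_ε(x_i)q_ε(x_j))] / (Σ_{j'=1}^{m+n} k_ε(x_i,x_{j'})/(q_ε(x_i)q_ε(x_{j'}))), suppose v₀, …, v_{K−1} ∈ ℝ^{m+n} satisfy −L v_i = μ_i v_i with ε²μ_i ≠ 1 for each i. Define H = Σ_{i=0}^{K−1} e^{−μ_i t} v_i v_iᵀ ∈ ℝ^{(m+n)×(m+n)} and H* = E (Σ_{i=0}^{K−1} e^{−μ_i t} (1−ε²μ_i)^{−2}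 v_i v_iᵀ) Eᵀ ∈ ℝ^{(m+n+ℓ)×(m+n+ℓ)}. Then H*(i,j) = H(i,j) for all 1 ≤ i, j ≤ m+n. -/
open MeasureTheory

noncomputable section

open Matrix

/-!
Since `A = I - ε² L`, an eigenvector of `-L` with eigenvalue `μ` is an eigenvector of `A` with
eigenvalue `1 - ε² μ`. On the original points the rows of `E` are exactly the rows of `A`, so
conjugating `v vᵀ` by them produces `(1 - ε² μ)² v vᵀ`, which cancels the weight `(1 - ε² μ)⁻²`.
-/

theorem mul_vecMulVec_mul_transpose {ι κ R : Type*} [Fintype κ] [CommSemiring R]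
    (A B : Matrix ι κ R) (u w : κ → R) :
    A * vecMulVec u w * Bᵀ = vecMulVec (A *ᵥ u) (B *ᵥ w) := by
  rw [mul_vecMulVec, vecMulVec_mul, vecMul_transpose]

theorem mul_sum_smul_vecMulVec_mul_transpose_of_mulVec_eq {ι κ R : Type*} [Fintype ι] [Fintype κ]
    [CommSemiring R] (A : Matrix ι ι R) (c eig : κ → R) (v : κ → ι → R)
    (hv : ∀ l, A *ᵥ v l = eig l • v l) :
    A * (∑ l, c l • vecMulVec (v l) (v l)) * Aᵀ
      = ∑ l, (c l * eig l ^ 2) • vecMulVec (v l) (v l) := by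
  simp only [Matrix.mul_sum, Matrix.sum_mul, Matrix.mul_smul, Matrix.smul_mul,
    mul_vecMulVec_mul_transpose, hv, smul_vecMulVec, vecMulVec_smul, smul_smul]
  exact Finset.sum_congr rfl fun l _ => by ring_nf

theorem Amat_mulVec_of_neg_Lmat_mulVec {D N : ℕ} {ε μ : ℝ} (hε : ε ≠ 0)
    {x : Fin N → EuclideanSpace ℝ (Fin D)} {v : Fin N → ℝ}
    (hv : (-Lmat ε x) *ᵥ v = μ • v) :
    Amat ε x *ᵥ v = (1 - ε ^ 2 * μ) • v := by
  have hA : Amat ε x = 1 - ε ^ 2 • -Lmat ε x := by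
    rw [Lmat, smul_neg, smul_smul, mul_one_div_cancel (pow_ne_zero 2 hε), one_smul]
    abel
  rw [hA, sub_mulVec, one_mulVec, smul_mulVec, hv, smul_smul, sub_smul, one_smul]

theorem extMat_mul_mul_transpose_castAdd {D m n ℓ : ℕ} (ε : ℝ)
    (x : Fin (m + n + ℓ) → EuclideanSpace ℝ (Fin D)) (S : Matrix (Fin (m + n)) (Fin (m + n)) ℝ)
    (i j : Fin (m + n)) :
    (extMat ε x * S * (extMat ε x)ᵀ) (Fin.castAdd ℓ i) (Fin.castAdd ℓ j)
      = (Amat ε (fun k => x (Fin.castAdd ℓ k)) * S *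
          (Amat ε (fun k => x (Fin.castAdd ℓ k)))ᵀ) i j :=
  rfl

/-- The Nyström extension `H* = E (Σ_i e^{-μ_i t}(1-ε²μ_i)⁻² v_i v_iᵀ) Eᵀ` of the
GL-GP covariance matrix `H = Σ_i e^{-μ_i t} v_i v_iᵀ` restricts to `H` on the original points. -/
theorem stmt9 {D m n ℓ K : ℕ} (ε t : ℝ) (hε : 0 < ε)
    (x : Fin (m + n + ℓ) → EuclideanSpace ℝ (Fin D))
    (μs : Fin K → ℝ) (v : Fin K → Fin (m + n) → ℝ)
    (hv : ∀ i, (-(Lmat ε (fun j : Fin (m + n) => x (Fin.castAdd ℓ j)))).mulVec (v i)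
      = μs i • v i)
    (hμ : ∀ i, ε ^ 2 * μs i ≠ 1) :
    ∀ i j : Fin (m + n),
      (extMat ε x *
        (∑ l, (Real.exp (-μs l * t) / (1 - ε ^ 2 * μs l) ^ 2) •
          Matrix.vecMulVec (v l) (v l)) *
        (extMat ε x).transpose) (Fin.castAdd ℓ i) (Fin.castAdd ℓ j)
      = (∑ l, Real.exp (-μs l * t) • Matrix.vecMulVec (v l) (v l)) i j := by
  intro i j
  rw [extMat_mul_mul_transpose_castAdd, mul_sum_smul_vecMulVec_mul_transpose_of_mulVec_eq _ _
    (fun l => 1 - ε ^ 2 * μs l) v fun l => Amat_mulVec_of_neg_Lmat_mulVec hε.ne' (hv l)]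
  refine congrFun (congrFun (Finset.sum_congr rfl fun l _ => ?_) i) j
  have hne : 1 - ε ^ 2 * μs l ≠ 0 := sub_ne_zero.2 (hμ l).symm
  rw [div_mul_cancel₀ _ (pow_ne_zero 2 hne)]
end
end

section
/- Let m, n ≥ 1, let H, Σ ∈ ℝ^{(m+n)×(m+n)} be symmetric matrices with block decompositions H = [[H₁, H₂],[H₃, H₄]] and Σ = [[Σ₁₁, Σ₁₂],[Σ₂₁, Σ₂₂]] where H₁, Σ₁₁ ∈ ℝ^{m×m} and H₃, Σ₂₁ ∈ ℝ^{n×m}. Let σ ≥ 0 and δ > 0 and suppose |H_{ij} − Σ_{ij}| ≤ δ for all entries. Suppose Σ₁₁ + σ²I is positive definite with smallest eigenvalue λ and λ > mδ. Then H₁ + σ²I is invertible, and for every y ∈ ℝ^m, ‖H₃(H₁ + σ²I)⁻¹ y − Σ₂₁(Σ₁₁ + σ²I)⁻¹ y‖_max ≤ (√m · δ · ‖y‖₂ / (λ − mδ)) · (1 + m · ‖Σ₂₁‖_max / λ), where ‖·‖_max denotes the maximum absolute entry and ‖·‖₂ the Euclidean norm. -/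
noncomputable section

open Matrix

private def en {m : ℕ} (x : Fin m → ℝ) : ℝ := Real.sqrt (∑ i, x i ^ 2)

private lemma en_nonneg {m : ℕ} (x : Fin m → ℝ) : 0 ≤ en x := Real.sqrt_nonneg _

private lemma en_eq_norm {m : ℕ} (x : Fin m → ℝ) :
    en x = ‖(WithLp.equiv 2 (Fin m → ℝ)).symm x‖ := by
  rw [EuclideanSpace.norm_eq]
  simp [en, sq_abs]

private lemma en_triangle {m : ℕ} (a b : Fin m → ℝ) : en (a + b) ≤ en a + en b := by
  simp only [en_eq_norm]
  rw [show (WithLp.equiv 2 (Fin m → ℝ)).symm (a + b)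
      = (WithLp.equiv 2 (Fin m → ℝ)).symm a + (WithLp.equiv 2 (Fin m → ℝ)).symm b from rfl]
  exact norm_add_le _ _

private lemma en_eq_zero {m : ℕ} {x : Fin m → ℝ} (h : en x = 0) : x = 0 := by
  have h0 : (0:ℝ) = ‖(WithLp.equiv 2 (Fin m → ℝ)).symm x‖ := h ▸ (en_eq_norm x)
  exact (WithLp.equiv 2 (Fin m → ℝ)).symm.injective (by rw [norm_eq_zero.mp h0.symm]; rfl)

private lemma cs {m : ℕ} (a b : Fin m → ℝ) :
    |∑ i, a i * b i| ≤ Real.sqrt (∑ i, a i ^ 2) * Real.sqrt (∑ i, b i ^ 2) := by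
  rw [← Real.sqrt_sq_eq_abs, ← Real.sqrt_mul (by positivity)]
  exact Real.sqrt_le_sqrt (Finset.sum_mul_sq_le_sq_mul_sq _ _ _)

private lemma entry_bound {m k : ℕ} (M : Matrix (Fin k) (Fin m) ℝ) (x : Fin m → ℝ) (c : ℝ)
    (hc : 0 ≤ c) (h : ∀ i j, |M i j| ≤ c) (i : Fin k) :
    |(M *ᵥ x) i| ≤ Real.sqrt m * c * en x := by
  have h1 : |(M *ᵥ x) i| ≤ Real.sqrt (∑ j, M i j ^ 2) * en x := cs (fun j => M i j) x
  have h2 : Real.sqrt (∑ j, M i j ^ 2) ≤ Real.sqrt m * c := by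
    rw [← Real.sqrt_sq hc, ← Real.sqrt_mul (by positivity)]
    apply Real.sqrt_le_sqrt
    calc ∑ j, M i j ^ 2 ≤ ∑ _j : Fin m, c ^ 2 := by
          refine Finset.sum_le_sum fun j _ => ?_
          rw [← sq_abs]
          exact pow_le_pow_left₀ (abs_nonneg _) (h i j) 2
      _ = m * c ^ 2 := by simp [mul_comm]
  exact h1.trans (mul_le_mul_of_nonneg_right h2 (en_nonneg x))

private lemma norm_bound {m k : ℕ} (M : Matrix (Fin k) (Fin m) ℝ) (x : Fin m → ℝ) (c : ℝ)
    (hc : 0 ≤ c) (h : ∀ i j, |M i j| ≤ c) :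
    en (M *ᵥ x) ≤ Real.sqrt k * Real.sqrt m * c * en x := by
  have key : ∀ i, (M *ᵥ x) i ^ 2 ≤ (Real.sqrt m * c * en x) ^ 2 := fun i => by
    rw [← sq_abs]
    exact pow_le_pow_left₀ (abs_nonneg _) (entry_bound M x c hc h i) 2
  have : en (M *ᵥ x) ≤ Real.sqrt (k * (Real.sqrt m * c * en x) ^ 2) := by
    apply Real.sqrt_le_sqrt
    calc ∑ i, (M *ᵥ x) i ^ 2 ≤ ∑ _i : Fin k, (Real.sqrt m * c * en x) ^ 2 :=
          Finset.sum_le_sum fun i _ => key i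
      _ = k * (Real.sqrt m * c * en x) ^ 2 := by simp [mul_comm]
  refine this.trans_eq ?_
  rw [Real.sqrt_mul (Nat.cast_nonneg k), Real.sqrt_sq (mul_nonneg (mul_nonneg (Real.sqrt_nonneg _) hc) (en_nonneg x))]
  ring

private lemma en_unitary {m : ℕ} (U : Matrix (Fin m) (Fin m) ℝ) (hU : Uᵀ * U = 1)
    (x : Fin m → ℝ) : en (U *ᵥ x) = en x := by
  unfold en
  congr 1
  have key : (U *ᵥ x) ⬝ᵥ (U *ᵥ x) = x ⬝ᵥ x := by
    rw [Matrix.dotProduct_mulVec, ← Matrix.mulVec_transpose, Matrix.mulVec_mulVec, hU,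
      Matrix.one_mulVec]
  simpa [dotProduct, pow_two] using key

private lemma en_lower {m : ℕ} (A : Matrix (Fin m) (Fin m) ℝ) (hA : A.IsHermitian)
    (lam : ℝ) (hlam0 : 0 ≤ lam) (hle : ∀ i, lam ≤ hA.eigenvalues i) (x : Fin m → ℝ) :
    lam * en x ≤ en (A *ᵥ x) := by
  set U : Matrix (Fin m) (Fin m) ℝ := (hA.eigenvectorUnitary : Matrix (Fin m) (Fin m) ℝ) with hUdef
  have hsU : star U = Uᵀ := Matrix.conjTranspose_eq_transpose_of_trivial U
  have hU1 : Uᵀ * U = 1 := by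
    rw [← hsU]; exact Matrix.UnitaryGroup.star_mul_self hA.eigenvectorUnitary
  have hU2 : U * Uᵀ = 1 := by
    rw [← hsU]; exact (Matrix.mem_unitaryGroup_iff).mp hA.eigenvectorUnitary.2
  set z : Fin m → ℝ := Uᵀ *ᵥ x with hz
  have hzx : en z = en x := en_unitary Uᵀ (by rw [Matrix.transpose_transpose]; exact hU2) x
  have hD : Matrix.diagonal (RCLike.ofReal ∘ hA.eigenvalues) = Matrix.diagonal hA.eigenvalues := by
    simp [RCLike.ofReal_real_eq_id]
  have hAx : A *ᵥ x = U *ᵥ (Matrix.diagonal hA.eigenvalues *ᵥ z) := by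
    rw [hz, Matrix.mulVec_mulVec, Matrix.mulVec_mulVec]
    conv_lhs => rw [hA.spectral_theorem]
    congr 1
  rw [hAx, en_unitary U hU1]
  rw [← hzx]
  unfold en
  rw [← Real.sqrt_sq hlam0, ← Real.sqrt_mul (by positivity), Finset.mul_sum]
  apply Real.sqrt_le_sqrt
  apply Finset.sum_le_sum
  intro i _
  rw [Matrix.mulVec_diagonal, mul_pow]
  exact mul_le_mul_of_nonneg_right (pow_le_pow_left₀ hlam0 (hle i) 2) (sq_nonneg _)

/-- Explicit bound on the difference of GP posterior-mean predictions under two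
entrywise-close symmetric covariance matrices. -/
theorem stmt10 {m n : ℕ} (hm : 1 ≤ m) (hn : 1 ≤ n)
    (H Sig : Matrix (Fin m ⊕ Fin n) (Fin m ⊕ Fin n) ℝ)
    (hHsymm : H.IsSymm) (hSsymm : Sig.IsSymm)
    (σ δ : ℝ) (hσ : 0 ≤ σ) (hδ : 0 < δ)
    (hclose : ∀ i j, |H i j - Sig i j| ≤ δ)
    (hPD : (Sig.toBlocks₁₁ + σ ^ 2 • (1 : Matrix (Fin m) (Fin m) ℝ)).PosDef)
    (hHerm : (Sig.toBlocks₁₁ + σ ^ 2 • (1 : Matrix (Fin m) (Fin m) ℝ)).IsHermitian)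
    (lam : ℝ) (hlam : lam = ⨅ i, hHerm.eigenvalues i)
    (hgap : (m : ℝ) * δ < lam) :
    IsUnit (H.toBlocks₁₁ + σ ^ 2 • (1 : Matrix (Fin m) (Fin m) ℝ)) ∧
    ∀ y : Fin m → ℝ,
      (⨆ i, |((H.toBlocks₂₁ *
            (H.toBlocks₁₁ + σ ^ 2 • (1 : Matrix (Fin m) (Fin m) ℝ))⁻¹).mulVec y) i -
          ((Sig.toBlocks₂₁ *
            (Sig.toBlocks₁₁ + σ ^ 2 • (1 : Matrix (Fin m) (Fin m) ℝ))⁻¹).mulVec y) i|)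
        ≤ (Real.sqrt m * δ * Real.sqrt (∑ i, y i ^ 2) / (lam - m * δ)) *
          (1 + m * (⨆ i, ⨆ j, |Sig.toBlocks₂₁ i j|) / lam) := by
  classical
  haveI : Nonempty (Fin m) := ⟨⟨0, hm⟩⟩
  haveI : Nonempty (Fin n) := ⟨⟨0, hn⟩⟩
  have hm' : (0:ℝ) < m := by exact_mod_cast hm
  have hmd : 0 < (m:ℝ) * δ := mul_pos hm' hδ
  have hlam0 : 0 < lam := hmd.trans hgap
  have hgap' : 0 < lam - (m:ℝ) * δ := sub_pos.mpr hgap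
  set A := Sig.toBlocks₁₁ + σ ^ 2 • (1 : Matrix (Fin m) (Fin m) ℝ) with hAdef
  set B := H.toBlocks₁₁ + σ ^ 2 • (1 : Matrix (Fin m) (Fin m) ℝ) with hBdef
  have hE : ∀ i j, |(B - A) i j| ≤ δ := by
    intro i j
    have h1 := hclose (Sum.inl i) (Sum.inl j)
    have h2 : (B - A) i j = H (Sum.inl i) (Sum.inl j) - Sig (Sum.inl i) (Sum.inl j) := by
      simp [hAdef, hBdef, Matrix.toBlocks₁₁, Matrix.sub_apply, Matrix.add_apply]
    rw [h2]; exact h1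
  have hE' : ∀ i j, |(A - B) i j| ≤ δ := by
    intro i j
    rw [Matrix.sub_apply, abs_sub_comm, ← Matrix.sub_apply]
    exact hE i j
  have hle : ∀ i, lam ≤ hHerm.eigenvalues i := fun i =>
    hlam ▸ ciInf_le (Set.Finite.bddBelow (Set.finite_range _)) i
  have hlowA : ∀ x, lam * en x ≤ en (A *ᵥ x) := en_lower A hHerm lam hlam0.le hle
  have sqrt_mul_self : Real.sqrt m * Real.sqrt m = (m:ℝ) :=
    Real.mul_self_sqrt (Nat.cast_nonneg m)
  have hEbound : ∀ x : Fin m → ℝ, en ((A - B) *ᵥ x) ≤ (m:ℝ) * δ * en x := by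
    intro x
    calc en ((A - B) *ᵥ x) ≤ Real.sqrt m * Real.sqrt m * δ * en x :=
          norm_bound (A - B) x δ hδ.le hE'
      _ = (m:ℝ) * δ * en x := by rw [sqrt_mul_self]
  have hlowB : ∀ x, (lam - (m:ℝ) * δ) * en x ≤ en (B *ᵥ x) := by
    intro x
    have h1 : en (A *ᵥ x) ≤ en (B *ᵥ x) + en ((A - B) *ᵥ x) := by
      have hAB : A = B + (A - B) := by abel
      have h0 : A *ᵥ x = B *ᵥ x + (A - B) *ᵥ x := by
        conv_lhs => rw [hAB, Matrix.add_mulVec]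
      rw [h0]; exact en_triangle _ _
    have h2 := hEbound x
    have h3 := hlowA x
    nlinarith [en_nonneg x]
  have hBinj : Function.Injective B.mulVec := by
    intro x x' hxx
    have h0 : B *ᵥ (x - x') = 0 := by rw [Matrix.mulVec_sub, hxx, sub_self]
    have h1 := hlowB (x - x')
    rw [h0] at h1
    have hen0 : en (0 : Fin m → ℝ) = 0 := by simp [en]
    rw [hen0] at h1
    have h3 : en (x - x') = 0 :=
      le_antisymm (by nlinarith [en_nonneg (x - x')]) (en_nonneg _)
    exact sub_eq_zero.mp (en_eq_zero h3)
  have hBunit : IsUnit B := Matrix.mulVec_injective_iff_isUnit.mp hBinj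
  refine ⟨hBunit, fun y => ?_⟩
  have hBdet : IsUnit B.det := (Matrix.isUnit_iff_isUnit_det B).mp hBunit
  have hAdet : IsUnit A.det := isUnit_iff_ne_zero.mpr hPD.det_pos.ne'
  set u := B⁻¹ *ᵥ y with hu_def
  set v := A⁻¹ *ᵥ y with hv_def
  have hBu : B *ᵥ u = y := by
    rw [hu_def, Matrix.mulVec_mulVec, Matrix.mul_nonsing_inv B hBdet, Matrix.one_mulVec]
  have hAv : A *ᵥ v = y := by
    rw [hv_def, Matrix.mulVec_mulVec, Matrix.mul_nonsing_inv A hAdet, Matrix.one_mulVec]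
  have hu : en u ≤ en y / (lam - (m:ℝ) * δ) := by
    rw [le_div_iff₀ hgap']
    have h1 := hlowB u
    rw [hBu] at h1
    linarith [mul_comm (en u) (lam - (m:ℝ) * δ)]
  have hdiff : A *ᵥ (u - v) = (A - B) *ᵥ u := by
    rw [Matrix.mulVec_sub, hAv, Matrix.sub_mulVec, hBu]
  have huv : en (u - v) ≤ (m:ℝ) * δ * en u / lam := by
    rw [le_div_iff₀ hlam0]
    have h1 := hlowA (u - v)
    rw [hdiff] at h1
    have h2 := hEbound u
    linarith [mul_comm (en (u - v)) lam]
  set c := ⨆ i, ⨆ j, |Sig.toBlocks₂₁ i j| with hcdef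
  have hc : ∀ i j, |Sig.toBlocks₂₁ i j| ≤ c := fun i j =>
    le_ciSup_of_le (Set.Finite.bddAbove (Set.finite_range _)) i
      (le_ciSup (f := fun j => |Sig.toBlocks₂₁ i j|) (Set.Finite.bddAbove (Set.finite_range _)) j)
  have hc0 : (0:ℝ) ≤ c := (abs_nonneg _).trans (hc (Classical.arbitrary _) (Classical.arbitrary _))
  have hH3 : ∀ i j, |(H.toBlocks₂₁ - Sig.toBlocks₂₁) i j| ≤ δ := by
    intro i j
    have h1 := hclose (Sum.inr i) (Sum.inl j)
    simpa [Matrix.toBlocks₂₁, Matrix.sub_apply] using h1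
  have hdecomp : H.toBlocks₂₁ *ᵥ u - Sig.toBlocks₂₁ *ᵥ v
      = (H.toBlocks₂₁ - Sig.toBlocks₂₁) *ᵥ u + Sig.toBlocks₂₁ *ᵥ (u - v) := by
    rw [Matrix.sub_mulVec, Matrix.mulVec_sub]
    abel
  have L := lam - (m:ℝ) * δ
  have key : ∀ i : Fin n,
      |((H.toBlocks₂₁ * B⁻¹) *ᵥ y) i - ((Sig.toBlocks₂₁ * A⁻¹) *ᵥ y) i|
        ≤ (Real.sqrt m * δ * en y / (lam - (m:ℝ) * δ)) * (1 + (m:ℝ) * c / lam) := by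
    intro i
    have hrw : ((H.toBlocks₂₁ * B⁻¹) *ᵥ y) i - ((Sig.toBlocks₂₁ * A⁻¹) *ᵥ y) i
        = ((H.toBlocks₂₁ - Sig.toBlocks₂₁) *ᵥ u) i + (Sig.toBlocks₂₁ *ᵥ (u - v)) i := by
      rw [← Matrix.mulVec_mulVec, ← Matrix.mulVec_mulVec, ← hu_def, ← hv_def,
        ← Pi.sub_apply (H.toBlocks₂₁ *ᵥ u) (Sig.toBlocks₂₁ *ᵥ v) i, hdecomp]
      rfl
    rw [hrw]
    have h1 : |((H.toBlocks₂₁ - Sig.toBlocks₂₁) *ᵥ u) i| ≤ Real.sqrt m * δ * en u :=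
      entry_bound _ u δ hδ.le hH3 i
    have h2 : |(Sig.toBlocks₂₁ *ᵥ (u - v)) i| ≤ Real.sqrt m * c * en (u - v) :=
      entry_bound _ (u - v) c hc0 hc i
    have h3 : Real.sqrt m * δ * en u ≤ Real.sqrt m * δ * (en y / (lam - (m:ℝ) * δ)) :=
      mul_le_mul_of_nonneg_left hu (by positivity)
    have h4 : en (u - v) ≤ (m:ℝ) * δ * (en y / (lam - (m:ℝ) * δ)) / lam := by
      refine huv.trans ?_
      exact (div_le_div_iff_of_pos_right hlam0).mpr (mul_le_mul_of_nonneg_left hu hmd.le)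
    have h5 : Real.sqrt m * c * en (u - v)
        ≤ Real.sqrt m * c * ((m:ℝ) * δ * (en y / (lam - (m:ℝ) * δ)) / lam) :=
      mul_le_mul_of_nonneg_left h4 (mul_nonneg (Real.sqrt_nonneg _) hc0)
    have hfinal : Real.sqrt m * δ * (en y / (lam - (m:ℝ) * δ))
        + Real.sqrt m * c * ((m:ℝ) * δ * (en y / (lam - (m:ℝ) * δ)) / lam)
        = (Real.sqrt m * δ * en y / (lam - (m:ℝ) * δ)) * (1 + (m:ℝ) * c / lam) := by
      field_simp
    calc |((H.toBlocks₂₁ - Sig.toBlocks₂₁) *ᵥ u) i + (Sig.toBlocks₂₁ *ᵥ (u - v)) i|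
        ≤ |((H.toBlocks₂₁ - Sig.toBlocks₂₁) *ᵥ u) i| + |(Sig.toBlocks₂₁ *ᵥ (u - v)) i| :=
          abs_add_le _ _
      _ ≤ Real.sqrt m * δ * en u + Real.sqrt m * c * en (u - v) := add_le_add h1 h2
      _ ≤ Real.sqrt m * δ * (en y / (lam - (m:ℝ) * δ))
          + Real.sqrt m * c * ((m:ℝ) * δ * (en y / (lam - (m:ℝ) * δ)) / lam) :=
          add_le_add h3 h5
      _ = _ := hfinal
  exact ciSup_le key
end
end

section
/- Let ε > 0, δ > 0 with δ ≤ ε, and let x, y, x', y' ∈ ℝ^D satisfy ‖x − x'‖ ≤ δ and ‖y − y'‖ ≤ δ. Then |exp(−‖x − y‖²/(4ε²)) − exp(−‖x' − y'‖²/(4ε²))| ≤ 2δ/ε. -/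
open MeasureTheory

noncomputable section

/-! The kernel is `t ↦ exp (-t²)` evaluated at `‖x - y‖ / (2ε)`. This profile is 1-Lipschitz,
because `2|t| ≤ 1 + t² ≤ exp (t²)` bounds its derivative `-2t exp (-t²)`; and `‖x - y‖` moves
by at most `‖x - x'‖ + ‖y - y'‖ ≤ 2δ`. Hence the kernel moves by at most `δ/ε`. -/

open Real

theorem two_mul_abs_mul_exp_neg_sq_le_one (t : ℝ) : 2 * |t| * exp (-t ^ 2) ≤ 1 := by
  have h : 2 * |t| ≤ exp (t ^ 2) := calc
    2 * |t| ≤ t ^ 2 + 1 := by nlinarith [sq_nonneg (|t| - 1), sq_abs t]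
    _ ≤ exp (t ^ 2) := add_one_le_exp _
  calc 2 * |t| * exp (-t ^ 2) ≤ exp (t ^ 2) * exp (-t ^ 2) := by gcongr
    _ = 1 := by rw [← exp_add, add_neg_cancel, exp_zero]

theorem lipschitzWith_one_exp_neg_sq : LipschitzWith 1 fun t : ℝ ↦ exp (-t ^ 2) := by
  refine lipschitzWith_of_nnnorm_deriv_le (by fun_prop) fun t ↦ ?_
  have hderiv : deriv (fun t : ℝ ↦ exp (-t ^ 2)) t = -(2 * t * exp (-t ^ 2)) := by
    simp [mul_comm]
  rw [← NNReal.coe_le_coe, coe_nnnorm, hderiv, norm_neg, Real.norm_eq_abs, abs_mul, abs_mul,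
    abs_of_pos (exp_pos _), abs_two, NNReal.coe_one]
  exact two_mul_abs_mul_exp_neg_sq_le_one t

theorem abs_norm_sub_sub_norm_sub_le {E : Type*} [SeminormedAddCommGroup E] (x y x' y' : E) :
    |‖x - y‖ - ‖x' - y'‖| ≤ ‖x - x'‖ + ‖y - y'‖ := by
  refine (abs_norm_sub_norm_le _ _).trans ?_
  rw [sub_sub_sub_comm]
  exact norm_sub_le _ _

theorem gaussKer_eq_exp_neg_sq {D : ℕ} (ε : ℝ) (x y : EuclideanSpace ℝ (Fin D)) :
    gaussKer ε x y = exp (-(‖x - y‖ / (2 * ε)) ^ 2) := by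
  rw [gaussKer, div_pow, mul_pow, neg_div]
  norm_num

theorem abs_gaussKer_sub_le {D : ℕ} {ε : ℝ} (hε : 0 ≤ ε) (x y x' y' : EuclideanSpace ℝ (Fin D)) :
    |gaussKer ε x y - gaussKer ε x' y'| ≤ (‖x - x'‖ + ‖y - y'‖) / (2 * ε) := by
  rw [gaussKer_eq_exp_neg_sq, gaussKer_eq_exp_neg_sq]
  calc _ ≤ |‖x - y‖ / (2 * ε) - ‖x' - y'‖ / (2 * ε)| := by
        simpa only [Real.dist_eq, NNReal.coe_one, one_mul] using
          lipschitzWith_one_exp_neg_sq.dist_le_mul (‖x - y‖ / (2 * ε)) (‖x' - y'‖ / (2 * ε))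
    _ = |‖x - y‖ - ‖x' - y'‖| / (2 * ε) := by
        rw [← sub_div, abs_div, abs_of_nonneg (by positivity : (0 : ℝ) ≤ 2 * ε)]
    _ ≤ (‖x - x'‖ + ‖y - y'‖) / (2 * ε) := by gcongr; exact abs_norm_sub_sub_norm_sub_le x y x' y'

theorem stmt11_general {D : ℕ} (ε δ : ℝ) (hε : 0 < ε)
    (x y x' y' : EuclideanSpace ℝ (Fin D))
    (hx : ‖x - x'‖ ≤ δ) (hy : ‖y - y'‖ ≤ δ) :
    |gaussKer ε x y - gaussKer ε x' y'| ≤ 2 * δ / ε := by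
  have hδ : 0 ≤ δ := (norm_nonneg _).trans hx
  calc _ ≤ (‖x - x'‖ + ‖y - y'‖) / (2 * ε) := abs_gaussKer_sub_le hε.le x y x' y'
    _ ≤ (δ + δ) / (2 * ε) := by gcongr
    _ = δ / ε := by field_simp; ring
    _ ≤ 2 * δ / ε := by gcongr; linarith

/-- Perturbation bound for the Gaussian kernel: if the arguments move by at
most `δ ≤ ε`, the kernel value moves by at most `2δ/ε`. -/
theorem stmt11 {D : ℕ} (ε δ : ℝ) (hε : 0 < ε) (hδ : 0 < δ) (hδε : δ ≤ ε)
    (x y x' y' : EuclideanSpace ℝ (Fin D))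
    (hx : ‖x - x'‖ ≤ δ) (hy : ‖y - y'‖ ≤ δ) :
    |gaussKer ε x y - gaussKer ε x' y'| ≤ 2 * δ / ε :=
  stmt11_general ε δ hε x y x' y' hx hy
end
end

section
/- Let ε > 0, ℓ > 0, and 0 < δ ≤ ℓ, and let x, y, x', y' ∈ ℝ^D satisfy ‖x − y‖ ≤ ℓ, ‖x − x'‖ ≤ δ and ‖y − y'‖ ≤ δ. Then exp(−2ℓδ/ε²) ≤ exp(−‖x − y‖²/(4ε²)) / exp(−‖x' − y'‖²/(4ε²)) ≤ exp(2ℓδ/ε²). -/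
/-!
Write `a = ‖x - y‖` and `b = ‖x' - y'‖`. The ratio of the two kernel values is
`exp ((b² - a²) / (4ε²))`, and `|b² - a²| = |b - a| (a + b)`. By the triangle inequality
`|b - a| ≤ 2δ`, so `a + b ≤ 2ℓ + 2δ ≤ 4ℓ` and `|b² - a²| ≤ 8ℓδ`.
-/

open MeasureTheory

noncomputable section

lemma abs_sq_sub_sq_le_of_abs_sub_le {a b η ℓ : ℝ} (ha : 0 ≤ a) (hb : 0 ≤ b)
    (hab : |a - b| ≤ η) (haℓ : a ≤ ℓ) : |b ^ 2 - a ^ 2| ≤ η * (2 * ℓ + η) := by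
  have hba : |b - a| ≤ η := abs_sub_comm a b ▸ hab
  have hsum : a + b ≤ 2 * ℓ + η := by linarith [(abs_le.mp hab).1]
  calc |b ^ 2 - a ^ 2| = |b - a| * (a + b) := by
        rw [show b ^ 2 - a ^ 2 = (b - a) * (a + b) by ring, abs_mul,
          abs_of_nonneg (add_nonneg ha hb)]
    _ ≤ η * (2 * ℓ + η) := mul_le_mul hba hsum (by positivity) ((abs_nonneg _).trans hba)

lemma abs_dist_sq_sub_dist_sq_le {α : Type*} [PseudoMetricSpace α] {x y x' y' : α} {ℓ δ : ℝ}
    (hxy : dist x y ≤ ℓ) (hx : dist x x' ≤ δ) (hy : dist y y' ≤ δ) (hδℓ : δ ≤ ℓ) :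
    |dist x' y' ^ 2 - dist x y ^ 2| ≤ 8 * ℓ * δ := by
  have hδ : 0 ≤ δ := dist_nonneg.trans hx
  have hdist : |dist x y - dist x' y'| ≤ 2 * δ := by
    rw [← Real.dist_eq]
    linarith [dist_dist_dist_le x y x' y']
  calc |dist x' y' ^ 2 - dist x y ^ 2| ≤ 2 * δ * (2 * ℓ + 2 * δ) :=
        abs_sq_sub_sq_le_of_abs_sub_le dist_nonneg dist_nonneg hdist hxy
    _ ≤ 8 * ℓ * δ := by nlinarith

lemma gaussKer_eq_exp_dist {D : ℕ} (ε : ℝ) (x y : EuclideanSpace ℝ (Fin D)) :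
    gaussKer ε x y = Real.exp (-dist x y ^ 2 / (4 * ε ^ 2)) := by
  rw [gaussKer, dist_eq_norm]

lemma gaussKer_div_gaussKer {D : ℕ} (ε : ℝ) (x y x' y' : EuclideanSpace ℝ (Fin D)) :
    gaussKer ε x y / gaussKer ε x' y' =
      Real.exp ((dist x' y' ^ 2 - dist x y ^ 2) / (4 * ε ^ 2)) := by
  rw [gaussKer_eq_exp_dist, gaussKer_eq_exp_dist, ← Real.exp_sub]
  ring_nf

lemma Real.exp_mem_Icc_of_abs_le {s r : ℝ} (h : |s| ≤ r) :
    Real.exp (-r) ≤ Real.exp s ∧ Real.exp s ≤ Real.exp r :=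
  ⟨Real.exp_le_exp.mpr (abs_le.mp h).1, Real.exp_le_exp.mpr (abs_le.mp h).2⟩

theorem stmt12_general {D : ℕ} (ε ℓ δ : ℝ) (hδℓ : δ ≤ ℓ)
    (x y x' y' : EuclideanSpace ℝ (Fin D))
    (hxy : ‖x - y‖ ≤ ℓ) (hx : ‖x - x'‖ ≤ δ) (hy : ‖y - y'‖ ≤ δ) :
    Real.exp (-(2 * ℓ * δ) / ε ^ 2) ≤ gaussKer ε x y / gaussKer ε x' y' ∧
    gaussKer ε x y / gaussKer ε x' y' ≤ Real.exp (2 * ℓ * δ / ε ^ 2) := by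
  rw [← dist_eq_norm] at hxy hx hy
  have hsq := abs_dist_sq_sub_dist_sq_le hxy hx hy hδℓ
  have hexponent : |(dist x' y' ^ 2 - dist x y ^ 2) / (4 * ε ^ 2)| ≤ 2 * ℓ * δ / ε ^ 2 :=
    calc |(dist x' y' ^ 2 - dist x y ^ 2) / (4 * ε ^ 2)|
        = |dist x' y' ^ 2 - dist x y ^ 2| / (4 * ε ^ 2) := by
          rw [abs_div, abs_of_nonneg (by positivity : (0 : ℝ) ≤ 4 * ε ^ 2)]
      _ ≤ 8 * ℓ * δ / (4 * ε ^ 2) := by gcongr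
      _ = 2 * ℓ * δ / ε ^ 2 := by ring
  rw [gaussKer_div_gaussKer, neg_div]
  exact Real.exp_mem_Icc_of_abs_le hexponent

/-- Two-sided multiplicative stability bound for the Gaussian kernel under
bounded perturbations of its arguments. -/
theorem stmt12 {D : ℕ} (ε ℓ δ : ℝ) (hε : 0 < ε) (hℓ : 0 < ℓ) (hδ : 0 < δ) (hδℓ : δ ≤ ℓ)
    (x y x' y' : EuclideanSpace ℝ (Fin D))
    (hxy : ‖x - y‖ ≤ ℓ) (hx : ‖x - x'‖ ≤ δ) (hy : ‖y - y'‖ ≤ δ) :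
    Real.exp (-(2 * ℓ * δ) / ε ^ 2) ≤ gaussKer ε x y / gaussKer ε x' y' ∧
    gaussKer ε x y / gaussKer ε x' y' ≤ Real.exp (2 * ℓ * δ / ε ^ 2) :=
  stmt12_general ε ℓ δ hδℓ x y x' y' hxy hx hy
end
end

section
/- Let ε > 0, N ≥ 1, δ > 0 with δ ≤ ε, and a > 0. Let x₁, …, x_N and x'₁, …, x'_N in ℝ^D satisfy ‖x_i − x'_i‖ ≤ δ for all i. Define q(x) = Σ_{j=1}^N k_ε(x, x_j), q'(x) = Σ_{j=1}^N k_ε(x, x'_j), W_{ij} = k_ε(x_i,x_j)/(q(x_i)q(x_j)), and W'_{ij} = k_ε(x'_i,x'_j)/(q'(x'_i)q'(x'_j)). Suppose q(x_i) ≥ a and q'(x'_i) ≥ a for all i. Then for all i, j: |W_{ij} − W'_{ij}| ≤ 2δ/(ε a²) + 4Nδ/(ε a³). -/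
open MeasureTheory

noncomputable section

/-- The one-dimensional profile `t ↦ exp(-t²/(4ε²))` is `1/(2ε)`-Lipschitz. -/
lemma gaussProfile_lip (ε : ℝ) (hε : 0 < ε) (s t : ℝ) :
    |Real.exp (-s ^ 2 / (4 * ε ^ 2)) - Real.exp (-t ^ 2 / (4 * ε ^ 2))|
      ≤ (1 / (2 * ε)) * |s - t| := by
  set f : ℝ → ℝ := fun u => Real.exp (-u ^ 2 / (4 * ε ^ 2)) with hf
  have hderiv : ∀ u : ℝ, HasDerivAt f ((-(2 * u) / (4 * ε ^ 2)) * Real.exp (-u ^ 2 / (4 * ε ^ 2))) u := by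
    intro u
    have h1 : HasDerivAt (fun u : ℝ => -u ^ 2 / (4 * ε ^ 2)) (-(2 * u) / (4 * ε ^ 2)) u := by
      have : HasDerivAt (fun u : ℝ => -u ^ 2) (-(2 * u)) u := by
        simpa [Pi.neg_def] using ((hasDerivAt_pow 2 u).neg)
      simpa using this.div_const (4 * ε ^ 2)
    simpa [hf, mul_comm] using h1.exp
  have hbound : ∀ u : ℝ, ‖(-(2 * u) / (4 * ε ^ 2)) * Real.exp (-u ^ 2 / (4 * ε ^ 2))‖ ≤ 1 / (2 * ε) := by
    intro u
    have hE : Real.exp (-u ^ 2 / (4 * ε ^ 2)) ≤ 4 * ε ^ 2 / (4 * ε ^ 2 + u ^ 2) := by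
      have h1 : (1 : ℝ) + u ^ 2 / (4 * ε ^ 2) ≤ Real.exp (u ^ 2 / (4 * ε ^ 2)) := by
        linarith [Real.add_one_le_exp (u ^ 2 / (4 * ε ^ 2))]
      have h2 : Real.exp (-u ^ 2 / (4 * ε ^ 2)) = 1 / Real.exp (u ^ 2 / (4 * ε ^ 2)) := by
        rw [neg_div, Real.exp_neg, inv_eq_one_div]
      rw [h2]
      rw [div_le_div_iff₀ (Real.exp_pos _) (by positivity)]
      have hε2 : (0 : ℝ) < 4 * ε ^ 2 := by positivity
      calc (1 : ℝ) * (4 * ε ^ 2 + u ^ 2) = (1 + u ^ 2 / (4 * ε ^ 2)) * (4 * ε ^ 2) := by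
            field_simp
        _ ≤ Real.exp (u ^ 2 / (4 * ε ^ 2)) * (4 * ε ^ 2) := by
            exact mul_le_mul_of_nonneg_right h1 (le_of_lt hε2)
        _ = 4 * ε ^ 2 * Real.exp (u ^ 2 / (4 * ε ^ 2)) := by ring
    have hEpos : 0 < Real.exp (-u ^ 2 / (4 * ε ^ 2)) := Real.exp_pos _
    rw [Real.norm_eq_abs, abs_mul, abs_div, abs_of_pos hEpos]
    have h3 : |(-(2 * u))| = 2 * |u| := by rw [abs_neg, abs_mul]; simp
    have h4 : |4 * ε ^ 2| = 4 * ε ^ 2 := abs_of_pos (by positivity)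
    rw [h3, h4]
    rw [div_mul_eq_mul_div, div_le_div_iff₀ (by positivity) (by positivity)]
    have key : |u| * Real.exp (-u ^ 2 / (4 * ε ^ 2)) ≤ ε := by
      calc |u| * Real.exp (-u ^ 2 / (4 * ε ^ 2))
          ≤ |u| * (4 * ε ^ 2 / (4 * ε ^ 2 + u ^ 2)) :=
            mul_le_mul_of_nonneg_left hE (abs_nonneg u)
        _ ≤ ε := by
            rw [mul_div_assoc', div_le_iff₀ (by positivity)]
            nlinarith [sq_nonneg (|u| - 2 * ε), sq_abs u, abs_nonneg u]
    nlinarith [key, hε]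
  have := Convex.norm_image_sub_le_of_norm_hasDerivWithin_le
    (f := f) (f' := fun u => (-(2 * u) / (4 * ε ^ 2)) * Real.exp (-u ^ 2 / (4 * ε ^ 2)))
    (s := Set.univ) (fun u _ => (hderiv u).hasDerivWithinAt)
    (fun u _ => hbound u) convex_univ (Set.mem_univ t) (Set.mem_univ s)
  simpa [hf, Real.norm_eq_abs] using this

/-- Kernel perturbation bound. -/
lemma gaussKer_close {D : ℕ} (ε : ℝ) (hε : 0 < ε) (p q p' q' : EuclideanSpace ℝ (Fin D)) :
    |gaussKer ε p q - gaussKer ε p' q'| ≤ (‖p - p'‖ + ‖q - q'‖) / (2 * ε) := by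
  have h1 := gaussProfile_lip ε hε ‖p - q‖ ‖p' - q'‖
  have h2 : |‖p - q‖ - ‖p' - q'‖| ≤ ‖p - p'‖ + ‖q - q'‖ := by
    have := abs_norm_sub_norm_le (p - q) (p' - q')
    have h3 : ‖(p - q) - (p' - q')‖ ≤ ‖p - p'‖ + ‖q - q'‖ := by
      have : (p - q) - (p' - q') = (p - p') - (q - q') := by abel
      rw [this]
      exact norm_sub_le _ _
    linarith
  calc |gaussKer ε p q - gaussKer ε p' q'|
      ≤ (1 / (2 * ε)) * |‖p - q‖ - ‖p' - q'‖| := h1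
    _ ≤ (1 / (2 * ε)) * (‖p - p'‖ + ‖q - q'‖) := by
        exact mul_le_mul_of_nonneg_left h2 (by positivity)
    _ = (‖p - p'‖ + ‖q - q'‖) / (2 * ε) := by ring

lemma gaussKer_pos {D : ℕ} (ε : ℝ) (p q : EuclideanSpace ℝ (Fin D)) : 0 < gaussKer ε p q :=
  Real.exp_pos _

lemma gaussKer_le_one {D : ℕ} (ε : ℝ) (p q : EuclideanSpace ℝ (Fin D)) :
    gaussKer ε p q ≤ 1 := by
  unfold gaussKer
  rw [Real.exp_le_one_iff]
  apply div_nonpos_of_nonpos_of_nonneg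
  · nlinarith [sq_nonneg ‖p - q‖]
  · positivity

set_option maxHeartbeats 1000000 in
/-- Entrywise perturbation bound for the kernel-normalized affinity matrix of
the graph Laplacian under bounded perturbations of the data points. -/
theorem stmt13 {D N : ℕ} (hN : 1 ≤ N) (ε δ a : ℝ) (hε : 0 < ε) (hδ : 0 < δ) (hδε : δ ≤ ε)
    (ha : 0 < a) (x x' : Fin N → EuclideanSpace ℝ (Fin D))
    (hclose : ∀ i, ‖x i - x' i‖ ≤ δ)
    (hq : ∀ i, a ≤ qDeg ε x (x i)) (hq' : ∀ i, a ≤ qDeg ε x' (x' i)) :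
    ∀ i j,
      |gaussKer ε (x i) (x j) / (qDeg ε x (x i) * qDeg ε x (x j)) -
        gaussKer ε (x' i) (x' j) / (qDeg ε x' (x' i) * qDeg ε x' (x' j))|
      ≤ 2 * δ / (ε * a ^ 2) + 4 * N * δ / (ε * a ^ 3) := by
  -- kernel entrywise bound
  have hker : ∀ i j, |gaussKer ε (x i) (x j) - gaussKer ε (x' i) (x' j)| ≤ δ / ε := by
    intro i j
    calc |gaussKer ε (x i) (x j) - gaussKer ε (x' i) (x' j)|
        ≤ (‖x i - x' i‖ + ‖x j - x' j‖) / (2 * ε) := gaussKer_close ε hε _ _ _ _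
      _ ≤ (δ + δ) / (2 * ε) := by
          gcongr
          · exact hclose i
          · exact hclose j
      _ = δ / ε := by ring
  -- degree perturbation bound
  have hqd : ∀ i, |qDeg ε x (x i) - qDeg ε x' (x' i)| ≤ N * (δ / ε) := by
    intro i
    unfold qDeg
    rw [← Finset.sum_sub_distrib]
    calc |∑ j, (gaussKer ε (x i) (x j) - gaussKer ε (x' i) (x' j))|
        ≤ ∑ j, |gaussKer ε (x i) (x j) - gaussKer ε (x' i) (x' j)| :=
          Finset.abs_sum_le_sum_abs _ _
      _ ≤ ∑ _j : Fin N, (δ / ε) := Finset.sum_le_sum fun j _ => hker i j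
      _ = N * (δ / ε) := by simp [mul_comm]
  intro i j
  set k := gaussKer ε (x i) (x j) with hk
  set k' := gaussKer ε (x' i) (x' j) with hk'
  set q1 := qDeg ε x (x i) with hq1
  set q2 := qDeg ε x (x j) with hq2
  set q1' := qDeg ε x' (x' i) with hq1'
  set q2' := qDeg ε x' (x' j) with hq2'
  have hq1a : a ≤ q1 := hq i
  have hq2a : a ≤ q2 := hq j
  have hq1'a : a ≤ q1' := hq' i
  have hq2'a : a ≤ q2' := hq' j
  have hq1p : 0 < q1 := lt_of_lt_of_le ha hq1a
  have hq2p : 0 < q2 := lt_of_lt_of_le ha hq2a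
  have hq1'p : 0 < q1' := lt_of_lt_of_le ha hq1'a
  have hq2'p : 0 < q2' := lt_of_lt_of_le ha hq2'a
  have hkp : 0 < k := gaussKer_pos ε _ _
  have hk'p : 0 < k' := gaussKer_pos ε _ _
  have hk'1 : k' ≤ 1 := gaussKer_le_one ε _ _
  have hkk' : |k - k'| ≤ δ / ε := hker i j
  have hd1 : |q1 - q1'| ≤ N * (δ / ε) := hqd i
  have hd2 : |q2 - q2'| ≤ N * (δ / ε) := hqd j
  clear_value k k' q1 q2 q1' q2'
  have hA : (0:ℝ) < q1 * q2 := mul_pos hq1p hq2p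
  have hB : (0:ℝ) < q1' * q2' := mul_pos hq1'p hq2'p
  have hid : k / (q1 * q2) - k' / (q1' * q2') =
      (k - k') / (q1 * q2) + k' * ((q1' * q2' - q1 * q2) / ((q1 * q2) * (q1' * q2'))) := by
    field_simp
    ring
  rw [hid]
  have haa12 : a ^ 2 ≤ q1 * q2 := by nlinarith
  have hterm1 : |(k - k') / (q1 * q2)| ≤ (δ / ε) / a ^ 2 := by
    rw [abs_div, abs_of_pos hA]
    exact div_le_div₀ (by positivity) hkk' (by positivity) haa12
  have hnum : |q1' * q2' - q1 * q2| ≤ N * (δ / ε) * (q2' + q1) := by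
    have hsplit : q1' * q2' - q1 * q2 = (q1' - q1) * q2' + q1 * (q2' - q2) := by ring
    rw [hsplit]
    calc |(q1' - q1) * q2' + q1 * (q2' - q2)|
        ≤ |(q1' - q1) * q2'| + |q1 * (q2' - q2)| := abs_add_le _ _
      _ = |q1' - q1| * q2' + q1 * |q2' - q2| := by
          rw [abs_mul, abs_mul, abs_of_pos hq2'p, abs_of_pos hq1p]
      _ ≤ N * (δ / ε) * q2' + q1 * (N * (δ / ε)) := by
          have h1 : |q1' - q1| ≤ N * (δ / ε) := by rw [abs_sub_comm]; exact hd1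
          have h2 : |q2' - q2| ≤ N * (δ / ε) := by rw [abs_sub_comm]; exact hd2
          exact add_le_add (mul_le_mul_of_nonneg_right h1 hq2'p.le)
            (mul_le_mul_of_nonneg_left h2 hq1p.le)
      _ = N * (δ / ε) * (q2' + q1) := by ring
  have hfrac : (q2' + q1) / ((q1 * q2) * (q1' * q2')) ≤ 2 / a ^ 3 := by
    rw [div_le_div_iff₀ (mul_pos hA hB) (by positivity)]
    have h3a : a ^ 3 ≤ q1' * (q1 * q2) := by
      have : a * (a * a) ≤ q1' * (q1 * q2) :=
        mul_le_mul hq1'a (mul_le_mul hq1a hq2a ha.le hq1p.le) (by positivity) hq1'p.le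
      nlinarith [this]
    have h3b : a ^ 3 ≤ q2' * (q2 * q1') := by
      have : a * (a * a) ≤ q2' * (q2 * q1') :=
        mul_le_mul hq2'a (mul_le_mul hq2a hq1'a ha.le hq2p.le) (by positivity) hq2'p.le
      nlinarith [this]
    nlinarith [mul_le_mul_of_nonneg_left h3a hq2'p.le, mul_le_mul_of_nonneg_left h3b hq1p.le]
  have hterm2 : |k' * ((q1' * q2' - q1 * q2) / ((q1 * q2) * (q1' * q2')))|
      ≤ N * (δ / ε) * (2 / a ^ 3) := by
    rw [abs_mul, abs_of_pos hk'p, abs_div, abs_of_pos (mul_pos hA hB)]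
    calc k' * (|q1' * q2' - q1 * q2| / ((q1 * q2) * (q1' * q2')))
        ≤ 1 * ((N * (δ / ε) * (q2' + q1)) / ((q1 * q2) * (q1' * q2'))) := by
          apply mul_le_mul hk'1 _ (div_nonneg (abs_nonneg _) (mul_pos hA hB).le) zero_le_one
          exact div_le_div₀ (mul_nonneg (by positivity) (add_pos hq2'p hq1p).le) hnum
            (mul_pos hA hB) le_rfl
      _ ≤ N * (δ / ε) * (2 / a ^ 3) := by
          rw [one_mul, mul_div_assoc]
          exact mul_le_mul_of_nonneg_left hfrac (by positivity)
  calc |(k - k') / (q1 * q2) + k' * ((q1' * q2' - q1 * q2) / ((q1 * q2) * (q1' * q2')))|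
      ≤ |(k - k') / (q1 * q2)| + |k' * ((q1' * q2' - q1 * q2) / ((q1 * q2) * (q1' * q2')))| :=
        abs_add_le _ _
    _ ≤ (δ / ε) / a ^ 2 + N * (δ / ε) * (2 / a ^ 3) := add_le_add hterm1 hterm2
    _ ≤ 2 * δ / (ε * a ^ 2) + 4 * N * δ / (ε * a ^ 3) := by
        have e1 : (δ / ε) / a ^ 2 = δ / (ε * a ^ 2) := by rw [div_div]
        have e2 : N * (δ / ε) * (2 / a ^ 3) = 2 * N * δ / (ε * a ^ 3) := by
          field_simp
        rw [e1, e2]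
        have h1 : δ / (ε * a ^ 2) ≤ 2 * δ / (ε * a ^ 2) := by gcongr; linarith
        have h2 : 2 * N * δ / (ε * a ^ 3) ≤ 4 * N * δ / (ε * a ^ 3) := by
          gcongr
          nlinarith [hδ.le, (Nat.cast_nonneg N : (0:ℝ) ≤ (N:ℝ))]
        linarith
end
end

section
/- Let d > 0, q > 0 and C > 0 be reals, and let n > 1 be a real number with log n ≥ C. Set γ = (n/log n)^{−d/(2q+2d)}. Then γ^{−2q/d} · log(C/γ) ≤ n γ². -/
/-!
Write `t = n / log n`, `α = d / (2q + 2d)` and `γ = t ^ (-α)`. Since `α · 2q/d = 1 - 2α`, we have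
`γ ^ (-2q/d) = t ^ (1 - 2α)` and `n γ² = t ^ (1 - 2α) log n`, so the claim reduces to
`log (C/γ) = log C + α log t ≤ log n`. This follows from `log C ≤ log log n`,
`α ≤ 1/2`, `log t = log n - log log n` and `log log n ≤ log n`.
-/

open Real

lemma log_add_mul_log_div_log_le {C n α : ℝ} (hC : 0 < C) (hCn : C ≤ log n) (hα : α ≤ 1 / 2) :
    log C + α * log (n / log n) ≤ log n := by
  have hL : 0 < log n := hC.trans_le hCn
  have hn : n ≠ 0 := by rintro rfl; simp at hL
  have hlogL : log (log n) ≤ log n - 1 := log_le_sub_one_of_pos hL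
  have hlog_div : log (n / log n) = log n - log (log n) := log_div hn hL.ne'
  have hCL : log C ≤ log (log n) := log_le_log hC hCn
  have hα_mul : α * log (n / log n) ≤ 1 / 2 * log (n / log n) :=
    mul_le_mul_of_nonneg_right hα (by rw [hlog_div]; linarith)
  linarith

lemma rpow_neg_mul_log_div_le {t L C α β : ℝ} (ht : 0 < t) (hC : 0 < C)
    (hαβ : α * β = 1 - 2 * α) (hL : log C + α * log t ≤ L) :
    (t ^ (-α)) ^ (-β) * log (C / t ^ (-α)) ≤ t * L * (t ^ (-α)) ^ (2 : ℝ) := by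
  have hlhs : (t ^ (-α)) ^ (-β) = t ^ (1 - 2 * α) := by
    rw [← rpow_mul ht.le, ← hαβ, neg_mul_neg]
  have hrhs : t * L * (t ^ (-α)) ^ (2 : ℝ) = t ^ (1 - 2 * α) * L := by
    rw [← rpow_mul ht.le, sub_eq_add_neg, rpow_add ht, rpow_one]
    ring_nf
  have hlog : log (C / t ^ (-α)) = log C + α * log t := by
    rw [log_div hC.ne' (rpow_pos_of_pos ht _).ne', log_rpow ht]
    ring
  rw [hlhs, hrhs, hlog]
  exact mul_le_mul_of_nonneg_left hL (rpow_pos_of_pos ht _).le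

/-- With `γ = (n/log n)^{-d/(2q+2d)}` and `log n ≥ C`, one has
`γ^{-2q/d} log(C/γ) ≤ n γ²`. -/
theorem stmt16 (d q C n : ℝ) (hd : 0 < d) (hq : 0 < q) (hC : 0 < C)
    (hn : 1 < n) (hlog : C ≤ Real.log n) :
    ((n / Real.log n) ^ (-(d / (2 * q + 2 * d)))) ^ (-(2 * q / d)) *
        Real.log (C / (n / Real.log n) ^ (-(d / (2 * q + 2 * d))))
      ≤ n * ((n / Real.log n) ^ (-(d / (2 * q + 2 * d)))) ^ (2 : ℝ) := by
  have hL : 0 < log n := hC.trans_le hlog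
  have hsum : 0 < 2 * q + 2 * d := by positivity
  have hα_le : d / (2 * q + 2 * d) ≤ 1 / 2 := by
    rw [div_le_iff₀ hsum]
    linarith
  have hαβ : d / (2 * q + 2 * d) * (2 * q / d) = 1 - 2 * (d / (2 * q + 2 * d)) := by
    field_simp
    ring
  have key := rpow_neg_mul_log_div_le (div_pos (by linarith) hL) hC hαβ
    (log_add_mul_log_div_log_le hC hlog hα_le)
  rwa [div_mul_cancel₀ n hL.ne'] at key
end
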